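/- arXiv:2508.11033 — 4 statements merged into one kernel-verified Lean document; each statement's English description precedes it below -/
import Mathlib

section
/- Suppose the pair (b, b_year) of real numbers satisfies the population normal equations Cov(ln D, ln L) = −b·Var(ln D) − b_year·Cov(ln D, Y) and Cov(Y − Y₀, ln L) = −b·Cov(ln D, Y) − b_year·Var(Y), where ln L is generated by the DGP ln L = ln B − β·ln D − β_year·(Y − Y₀) − β·ε with Cov(Y, ε) = 0, and suppose the Gram determinant Var(ln D)·Var(Y) − Cov(ln D, Y)² is nonzero. Then the probability limit of the OLS slope on ln D satisfies b = β·(1 + Var(Y)·Cov(ln D, ε) / (Var(ln D)·Var(Y) − Cov(ln D, Y)²)). -/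
open MeasureTheory ProbabilityTheory

/-! Bilinearity of the covariance turns the left-hand sides of the normal equations into
`-β Var X - β_year Cov(X, Y) - β Cov(X, ε)` and `-β Cov(X, Y) - β_year Var Y`, the latter because
`Cov(Y, ε) = 0`; solving the resulting 2 × 2 linear system for `b` by Cramer's rule gives the
formula. -/

/-- Covariance of two real-valued random variables with respect to a measure `μ`. -/
noncomputable def cov {Ω : Type*} [MeasurableSpace Ω] (μ : Measure Ω) (X Y : Ω → ℝ) : ℝ :=
  ∫ ω, (X ω - ∫ x, X x ∂μ) * (Y ω - ∫ x, Y x ∂μ) ∂μ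

lemma cov_eq_covariance {Ω : Type*} [MeasurableSpace Ω] (μ : Measure Ω) (X Y : Ω → ℝ) :
    cov μ X Y = cov[X, Y; μ] :=
  rfl

lemma covariance_affine_right {Ω : Type*} [MeasurableSpace Ω] {μ : Measure Ω}
    [IsProbabilityMeasure μ] {Z X Y ε : Ω → ℝ} (hZ : MemLp Z 2 μ) (hX : MemLp X 2 μ)
    (hY : MemLp Y 2 μ) (hε : MemLp ε 2 μ) (c a b d : ℝ) :
    cov[Z, fun ω ↦ c - a * X ω - b * Y ω - d * ε ω; μ] =
      -a * cov[Z, X; μ] - b * cov[Z, Y; μ] - d * cov[Z, ε; μ] := by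
  have hcX : MemLp (fun ω ↦ c - a * X ω) 2 μ := (memLp_const c).sub (hX.const_mul a)
  have hcXY : MemLp (fun ω ↦ c - a * X ω - b * Y ω) 2 μ := hcX.sub (hY.const_mul b)
  rw [covariance_fun_sub_right hZ hcXY (hε.const_mul d),
    covariance_fun_sub_right hZ hcX (hY.const_mul b),
    covariance_const_sub_right ((hX.const_mul a).integrable one_le_two), covariance_const_mul_right,
    covariance_const_mul_right, covariance_const_mul_right]
  ring

-- Cramer's rule for `b`.
lemma slope_of_normal_equations {v w c cε β β' b b' : ℝ} (hGram : v * w - c ^ 2 ≠ 0)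
    (h₁ : -β * v - β' * c - β * cε = -b * v - b' * c)
    (h₂ : -β * c - β' * w = -b * c - b' * w) :
    b = β * (1 + w * cε / (v * w - c ^ 2)) := by
  rw [mul_add, mul_one, ← mul_div_assoc, eq_comm, ← eq_sub_iff_add_eq', div_eq_iff hGram]
  linear_combination c * h₂ - w * h₁

/-- Probability limit of the OLS slope on `ln D` from the misspecified regression. -/
theorem plim_beta_hat {Ω : Type*} [MeasurableSpace Ω] (μ : Measure Ω) [IsProbabilityMeasure μ]
    (X Y ε : Ω → ℝ) (hX : MemLp X 2 μ) (hY : MemLp Y 2 μ) (hε : MemLp ε 2 μ)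
    (β β_year lnB Y₀ : ℝ) (lnL : Ω → ℝ)
    (hlnL : ∀ ω, lnL ω = lnB - β * X ω - β_year * (Y ω - Y₀) - β * ε ω)
    (hYε : cov μ Y ε = 0) (b b_year : ℝ)
    (h1 : cov μ X lnL = -b * variance X μ - b_year * cov μ X Y)
    (h2 : cov μ (fun ω => Y ω - Y₀) lnL = -b * cov μ X Y - b_year * variance Y μ)
    (hGram : variance X μ * variance Y μ - (cov μ X Y) ^ 2 ≠ 0) :
    b = β * (1 + variance Y μ * cov μ X ε /
      (variance X μ * variance Y μ - (cov μ X Y) ^ 2)) := by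
  simp only [cov_eq_covariance] at *
  have hL : lnL = fun ω ↦ (lnB + β_year * Y₀) - β * X ω - β_year * Y ω - β * ε ω :=
    funext fun ω ↦ by rw [hlnL]; ring
  rw [hL, covariance_affine_right hX hX hY hε, covariance_self hX.aemeasurable] at h1
  rw [covariance_sub_const_left (hY.integrable one_le_two), hL, covariance_affine_right hY hX hY hε,
    hYε, mul_zero, sub_zero, covariance_self hY.aemeasurable, covariance_comm Y X] at h2
  exact slope_of_normal_equations hGram h1 h2
end

section
/- Suppose the pair (b, b_year) of real numbers satisfies the population normal equations Cov(ln D, ln L) = −b·Var(ln D) − b_year·Cov(ln D, Y) and Cov(Y − Y₀, ln L) = −b·Cov(ln D, Y) − b_year·Var(Y), where ln L is generated by the DGP ln L = ln B − β·ln D − β_year·(Y − Y₀) − β·ε with Cov(Y, ε) = 0, and suppose the Gram determinant Var(ln D)·Var(Y) − Cov(ln D, Y)² is nonzero. Then the probability limit of the OLS coefficient on calendar time satisfies b_year = β_year − β·Cov(ln D, ε)·Cov(ln D, Y) / (Var(ln D)·Var(Y) − Cov(ln D, Y)²). -/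
open MeasureTheory ProbabilityTheory

lemma eq_div_of_gram_system {A C D f g u v : ℝ} (hdet : A * D - C ^ 2 ≠ 0)
    (h₁ : A * u + C * v = f) (h₂ : C * u + D * v = g) :
    v = (A * g - C * f) / (A * D - C ^ 2) := by
  rw [eq_div_iff hdet]
  linear_combination A * h₂ - C * h₁

lemma covariance_const_sub_sub_sub_right {Ω : Type*} [MeasurableSpace Ω] {μ : Measure Ω}
    [IsProbabilityMeasure μ] {W X Y Z : Ω → ℝ} (hW : MemLp W 2 μ) (hX : MemLp X 2 μ)
    (hY : MemLp Y 2 μ) (hZ : MemLp Z 2 μ) (c p q r : ℝ) :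
    cov[W, fun ω ↦ c - p * X ω - q * Y ω - r * Z ω; μ] =
      -(p * cov[W, X; μ]) - q * cov[W, Y; μ] - r * cov[W, Z; μ] := by
  have hcX : MemLp (fun ω ↦ c - p * X ω) 2 μ := (memLp_const c).sub (hX.const_mul p)
  have hcXY : MemLp (fun ω ↦ c - p * X ω - q * Y ω) 2 μ := hcX.sub (hY.const_mul q)
  rw [covariance_fun_sub_right hW hcXY (hZ.const_mul r),
    covariance_fun_sub_right hW hcX (hY.const_mul q),
    covariance_fun_sub_right hW (memLp_const c) (hX.const_mul p),
    covariance_const_right, covariance_const_mul_right, covariance_const_mul_right,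
    covariance_const_mul_right]
  ring

/-- Probability limit of the OLS coefficient on calendar time from the misspecified
regression. -/
theorem plim_beta_year_hat {Ω : Type*} [MeasurableSpace Ω] (μ : Measure Ω) [IsProbabilityMeasure μ]
    (X Y ε : Ω → ℝ) (hX : MemLp X 2 μ) (hY : MemLp Y 2 μ) (hε : MemLp ε 2 μ)
    (β β_year lnB Y₀ : ℝ) (lnL : Ω → ℝ)
    (hlnL : ∀ ω, lnL ω = lnB - β * X ω - β_year * (Y ω - Y₀) - β * ε ω)
    (hYε : cov μ Y ε = 0) (b b_year : ℝ)
    (h1 : cov μ X lnL = -b * variance X μ - b_year * cov μ X Y)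
    (h2 : cov μ (fun ω => Y ω - Y₀) lnL = -b * cov μ X Y - b_year * variance Y μ)
    (hGram : variance X μ * variance Y μ - (cov μ X Y) ^ 2 ≠ 0) :
    b_year = β_year - β * cov μ X ε * cov μ X Y /
      (variance X μ * variance Y μ - (cov μ X Y) ^ 2) := by
  have hL : lnL = fun ω ↦ (lnB + β_year * Y₀) - β * X ω - β_year * Y ω - β * ε ω :=
    funext fun ω ↦ by rw [hlnL]; ring
  simp only [cov_eq_covariance] at *
  rw [hL, covariance_const_sub_sub_sub_right hX hX hY hε,
    covariance_self hX.aemeasurable] at h1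
  rw [covariance_sub_const_left (hY.integrable one_le_two), hL,
    covariance_const_sub_sub_sub_right hY hX hY hε, covariance_self hY.aemeasurable,
    covariance_comm Y X, hYε] at h2
  have hsolve := eq_div_of_gram_system hGram (u := b - β) (v := b_year - β_year)
    (f := β * cov[X, ε; μ]) (g := 0) (by linear_combination h1) (by linear_combination h2)
  linear_combination hsolve
end

section
/- (Theorem 1, sign of the bias in the estimated rate of algorithmic progress.) Assume Cov(ln D, Y) > 0, β > 0, β_year > 0, Cov(Y, ε) = 0, Var(Y) > 0, the Gram determinant Var(ln D)·Var(Y) − Cov(ln D, Y)² is positive, and Cov(ln D, ε) > −Var(ln D − (Cov(ln D, Y)/Var(Y))·Y). Let (b, b_year) satisfy the population normal equations Cov(ln D, ln L) = −b·Var(ln D) − b_year·Cov(ln D, Y) and Cov(Y − Y₀, ln L) = −b·Cov(ln D, Y) − b_year·Var(Y) for ln L generated by the DGP ln L = ln B − β·ln D − β_year·(Y − Y₀) − β·ε. Then the sign of the large-sample bias b_year/b − β_year/β equals minus the sign of Cov(ln D, ε): the bias is negative if Cov(ln D, ε) > 0, zero if Cov(ln D, ε) = 0, and positive if Cov(ln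 D, ε) < 0. -/
/-!
Under the data-generating process, `Cov(Z, ln L)` is linear in `Cov(Z, ln D)`, `Cov(Z, Y)` and
`Cov(Z, ε)`, so the normal equations reduce to a 2×2 linear system for the deviations
`b - β`, `b_year - β_year` with Gram determinant `G = Var(ln D) Var(Y) - Cov(ln D, Y)²`.
Cramer's rule gives, with `S = Cov(ln D, ε)`, the closed form
`b_year / b - β_year / β = -S (β Cov(ln D, Y) + β_year Var(Y)) / (β (G + S Var(Y)))`.
The selection condition says exactly that `G + S Var(Y) > 0`, since the variance of the residual
of `ln D` after regressing on `Y` is `G / Var(Y)`; all other factors are positive.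
-/

open MeasureTheory ProbabilityTheory

section

variable {Ω : Type*} [MeasurableSpace Ω] {μ : Measure Ω} [IsProbabilityMeasure μ]
  {X Y ε Z lnL : Ω → ℝ}

lemma covariance_eq_of_linear_model {β β_year lnB Y₀ : ℝ}
    (hX : MemLp X 2 μ) (hY : MemLp Y 2 μ) (hε : MemLp ε 2 μ) (hZ : MemLp Z 2 μ)
    (hlnL : ∀ ω, lnL ω = lnB - β * X ω - β_year * (Y ω - Y₀) - β * ε ω) :
    cov[Z, lnL; μ] = -β * cov[Z, X; μ] - β_year * cov[Z, Y; μ] - β * cov[Z, ε; μ] := by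
  have hlin : lnL = fun ω => (-β * X ω - β_year * Y ω - β * ε ω) + (lnB + β_year * Y₀) := by
    ext ω; rw [hlnL]; ring
  have hXY : MemLp (fun ω => -β * X ω - β_year * Y ω) 2 μ :=
    (hX.const_mul _).sub (hY.const_mul _)
  have hint : Integrable (fun ω => -β * X ω - β_year * Y ω - β * ε ω) μ :=
    (hXY.sub (hε.const_mul _)).integrable one_le_two
  rw [hlin, covariance_add_const_right hint, covariance_fun_sub_right hZ hXY (hε.const_mul _),
    covariance_fun_sub_right hZ (hX.const_mul _) (hY.const_mul _),
    covariance_const_mul_right, covariance_const_mul_right, covariance_const_mul_right]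

lemma variance_regression_residual (hX : MemLp X 2 μ) (hY : MemLp Y 2 μ)
    (hVarY : variance Y μ ≠ 0) :
    variance (fun ω => X ω - (cov[X, Y; μ] / variance Y μ) * Y ω) μ
      = (variance X μ * variance Y μ - cov[X, Y; μ] ^ 2) / variance Y μ := by
  rw [variance_fun_sub hX (hY.const_mul _), variance_const_mul, covariance_const_mul_right]
  field_simp
  ring

end

lemma bias_eq_of_normal_equations {VX VY C S β β_year b b_year : ℝ} (hβ : β ≠ 0)
    (hG : VX * VY - C ^ 2 ≠ 0) (hsel : VX * VY - C ^ 2 + S * VY ≠ 0)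
    (h1 : -β * VX - β_year * C - β * S = -b * VX - b_year * C)
    (h2 : -β * C - β_year * VY = -b * C - b_year * VY) :
    b_year / b - β_year / β
      = -(S * (β * C + β_year * VY)) / (β * (VX * VY - C ^ 2 + S * VY)) := by
  have hb : b * (VX * VY - C ^ 2) = β * (VX * VY - C ^ 2 + S * VY) := by
    linear_combination VY * h1 - C * h2
  have hb0 : b ≠ 0 := by
    rintro rfl
    exact mul_ne_zero hβ hsel (by simpa using hb.symm)
  rw [div_sub_div _ _ hb0 hβ, div_eq_div_iff (mul_ne_zero hb0 hβ) (mul_ne_zero hβ hsel)]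
  have hdev : (b_year - β_year) * (VX * VY - C ^ 2) = -(β * S * C) := by
    linear_combination VX * h2 - C * h1
  apply mul_left_cancel₀ hG
  linear_combination β * S * (β * C + β_year * VY) * hb
    + β * (VX * VY - C ^ 2 + S * VY) * (β * hdev - β_year * hb)

/-- Theorem 1: the sign of the large-sample bias `b_year/b − β_year/β` is minus the
sign of the selection covariance `Cov(ln D, ε)`. -/
theorem bias_sign {Ω : Type*} [MeasurableSpace Ω] (μ : Measure Ω) [IsProbabilityMeasure μ]
    (X Y ε : Ω → ℝ) (hX : MemLp X 2 μ) (hY : MemLp Y 2 μ) (hε : MemLp ε 2 μ)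
    (β β_year lnB Y₀ : ℝ) (lnL : Ω → ℝ)
    (hlnL : ∀ ω, lnL ω = lnB - β * X ω - β_year * (Y ω - Y₀) - β * ε ω)
    (hXY : 0 < cov μ X Y) (hβ : 0 < β) (hβyear : 0 < β_year) (hYε : cov μ Y ε = 0)
    (hVarY : 0 < variance Y μ)
    (hGram : 0 < variance X μ * variance Y μ - (cov μ X Y) ^ 2)
    (hsel : cov μ X ε > -variance (fun ω => X ω - (cov μ X Y / variance Y μ) * Y ω) μ)
    (b b_year : ℝ)
    (h1 : cov μ X lnL = -b * variance X μ - b_year * cov μ X Y)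
    (h2 : cov μ (fun ω => Y ω - Y₀) lnL = -b * cov μ X Y - b_year * variance Y μ) :
    (0 < cov μ X ε → b_year / b - β_year / β < 0) ∧
    (cov μ X ε = 0 → b_year / b - β_year / β = 0) ∧
    (cov μ X ε < 0 → 0 < b_year / b - β_year / β) := by
  simp only [cov_eq_covariance] at *
  rw [covariance_eq_of_linear_model hX hY hε hX hlnL, covariance_self hX.aemeasurable] at h1
  rw [covariance_sub_const_left (hY.integrable one_le_two),
    covariance_eq_of_linear_model hX hY hε hY hlnL, covariance_comm Y X, hYε, mul_zero, sub_zero,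
    covariance_self hY.aemeasurable] at h2
  rw [variance_regression_residual hX hY hVarY.ne', gt_iff_lt, neg_lt, lt_div_iff₀ hVarY] at hsel
  have hsel' :
      0 < variance X μ * variance Y μ - cov[X, Y; μ] ^ 2 + cov[X, ε; μ] * variance Y μ := by
    linarith
  have hden := mul_pos hβ hsel'
  have hnum : 0 < β * cov[X, Y; μ] + β_year * variance Y μ := by positivity
  rw [bias_eq_of_normal_equations hβ.ne' hGram.ne' hsel'.ne' h1 h2]
  exact ⟨fun hS => div_neg_of_neg_of_pos (neg_neg_of_pos (mul_pos hS hnum)) hden,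
    fun hS => by simp [hS],
    fun hS => div_pos (neg_pos.mpr (mul_neg_of_neg_of_pos hS hnum)) hden⟩
end

section
/- Assume β > 0, Cov(ln D, Y) > 0, Cov(Y, ε) = 0, the Gram determinant Var(ln D)·Var(Y) − Cov(ln D, Y)² is positive, and (b, b_year) satisfies the population normal equations Cov(ln D, ln L) = −b·Var(ln D) − b_year·Cov(ln D, Y) and Cov(Y − Y₀, ln L) = −b·Cov(ln D, Y) − b_year·Var(Y) for ln L generated by the DGP ln L = ln B − β·ln D − β_year·(Y − Y₀) − β·ε. Then the sign of b_year − β_year equals minus the sign of Cov(ln D, ε): the OLS probability limit of the calendar-time coefficient is biased downward when Cov(ln D, ε) > 0, unbiased when Cov(ln D, ε) = 0, and biased upward when Cov(ln D, ε) < 0. -/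
/-!
Substituting the data-generating process into the normal equations and expanding the
covariances bilinearly turns them into the 2 × 2 system
  `(b - β) Var X + (b_year - β_year) Cov(X, Y) = β Cov(X, ε)`,
  `(b - β) Cov(X, Y) + (b_year - β_year) Var Y = β Cov(Y, ε) = 0`.
Cramer's rule gives `(b_year - β_year) (Var X Var Y - Cov(X, Y)²) = -β Cov(X, Y) Cov(X, ε)`,
and since the Gram determinant, `β` and `Cov(X, Y)` are positive, `b_year - β_year` has the
sign of `-Cov(X, ε)`.
-/

open MeasureTheory ProbabilityTheory

lemma covariance_const_sub_linear_right {Ω : Type*} [MeasurableSpace Ω] {μ : Measure Ω}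
    [IsProbabilityMeasure μ] {Z X Y ε : Ω → ℝ} (hZ : MemLp Z 2 μ) (hX : MemLp X 2 μ)
    (hY : MemLp Y 2 μ) (hε : MemLp ε 2 μ) (a c d e : ℝ) :
    cov[Z, fun ω ↦ a - c * X ω - d * Y ω - e * ε ω; μ]
      = -c * cov[Z, X; μ] - d * cov[Z, Y; μ] - e * cov[Z, ε; μ] := by
  have hcX : MemLp (fun ω ↦ a - c * X ω) 2 μ := (memLp_const a).sub (hX.const_mul c)
  have hcXY : MemLp (fun ω ↦ a - c * X ω - d * Y ω) 2 μ := hcX.sub (hY.const_mul d)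
  rw [covariance_fun_sub_right hZ hcXY (hε.const_mul e),
    covariance_fun_sub_right hZ hcX (hY.const_mul d),
    covariance_const_sub_right ((hX.integrable one_le_two).const_mul c),
    covariance_const_mul_right, covariance_const_mul_right, covariance_const_mul_right]
  ring

lemma bias_mul_gram_of_normal_equations {A V C Sx Sy β γ b c : ℝ}
    (h1 : -β * A - γ * C - β * Sx = -b * A - c * C)
    (h2 : -β * C - γ * V - β * Sy = -b * C - c * V) :
    (c - γ) * (A * V - C ^ 2) = β * (A * Sy - C * Sx) := by
  linear_combination A * h2 - C * h1

lemma sign_cases_of_mul_eq_neg_mul {x g k s : ℝ} (hg : 0 < g) (hk : 0 < k)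
    (h : x * g = -(k * s)) :
    (0 < s → x < 0) ∧ (s = 0 → x = 0) ∧ (s < 0 → 0 < x) := by
  have hx : x = -(k * s) / g := by rw [← h, mul_div_cancel_right₀ _ hg.ne']
  refine ⟨fun hs ↦ ?_, fun hs ↦ ?_, fun hs ↦ ?_⟩ <;> rw [hx]
  · exact div_neg_of_neg_of_pos (neg_neg_of_pos (mul_pos hk hs)) hg
  · simp [hs]
  · exact div_pos (neg_pos.2 (mul_neg_of_pos_of_neg hk hs)) hg

/-- The sign of the bias in the OLS probability limit of the calendar-time coefficient
is minus the sign of the selection covariance `Cov(ln D, ε)`. -/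
theorem beta_year_hat_bias_sign {Ω : Type*} [MeasurableSpace Ω] (μ : Measure Ω) [IsProbabilityMeasure μ]
    (X Y ε : Ω → ℝ) (hX : MemLp X 2 μ) (hY : MemLp Y 2 μ) (hε : MemLp ε 2 μ)
    (β β_year lnB Y₀ : ℝ) (lnL : Ω → ℝ)
    (hlnL : ∀ ω, lnL ω = lnB - β * X ω - β_year * (Y ω - Y₀) - β * ε ω)
    (hβ : 0 < β) (hXY : 0 < cov μ X Y) (hYε : cov μ Y ε = 0)
    (hGram : 0 < variance X μ * variance Y μ - (cov μ X Y) ^ 2)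
    (b b_year : ℝ)
    (h1 : cov μ X lnL = -b * variance X μ - b_year * cov μ X Y)
    (h2 : cov μ (fun ω => Y ω - Y₀) lnL = -b * cov μ X Y - b_year * variance Y μ) :
    (0 < cov μ X ε → b_year - β_year < 0) ∧
    (cov μ X ε = 0 → b_year - β_year = 0) ∧
    (cov μ X ε < 0 → 0 < b_year - β_year) := by
  have hlnL' : lnL = fun ω ↦ (lnB + β_year * Y₀) - β * X ω - β_year * Y ω - β * ε ω := by
    funext ω; rw [hlnL ω]; ring
  simp only [cov_eq_covariance, hlnL'] at *
  rw [covariance_const_sub_linear_right hX hX hY hε, covariance_self hX.aemeasurable] at h1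
  rw [covariance_sub_const_left (hY.integrable one_le_two),
    covariance_const_sub_linear_right hY hX hY hε, covariance_self hY.aemeasurable,
    covariance_comm Y X] at h2
  have hbias := bias_mul_gram_of_normal_equations h1 h2
  rw [hYε] at hbias
  exact sign_cases_of_mul_eq_neg_mul hGram (mul_pos hβ hXY) (by rw [hbias]; ring)
end
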